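/- arXiv:2205.08168 — 2 statements merged into one kernel-verified Lean document; each statement's English description precedes it below -/
import Mathlib

section
/- Let α, M > 0 and choose T* > 0 such that M·exp(αM)·(1 − exp(−T*)) ≤ min{μ/(2Mα), 1} for a given μ > 0. Suppose p : [0,T] → ℝ with T ≤ T* satisfies the variation-of-constants formula p(t) = e^{−t} p₀ + ∫₀ᵗ e^{−(t−s)} w(s) e^{α c(s)} c(s) ds, where 0 ≤ c(s) ≤ M and 0 ≤ w(s) ≤ W for all s. Then p(t) ≤ p₀ + min{μ/(2Mα), 1}·W for all t ∈ [0,T]. -/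
open Set Real intervalIntegral

/-- on a short time interval chosen so that
`M e^{αM} (1 - e^{-T*}) ≤ min {μ/(2Mα), 1}`, the variation-of-constants formula
yields `p(t) ≤ p₀ + min {μ/(2Mα), 1} · W`. -/
theorem stmt2 (α M μ Tstar T p₀ W : ℝ) (hα : 0 < α) (hM : 0 < M) (hμ : 0 < μ)
    (hTstar : 0 < Tstar)
    (hsmall : M * Real.exp (α * M) * (1 - Real.exp (-Tstar)) ≤ min (μ / (2 * M * α)) 1)
    (hT : 0 < T) (hTT : T ≤ Tstar)
    (p w c : ℝ → ℝ)
    (hwc : ContinuousOn w (Icc 0 T)) (hcc : ContinuousOn c (Icc 0 T))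
    (hvoc : ∀ t ∈ Icc 0 T, p t = Real.exp (-t) * p₀
      + ∫ s in (0:ℝ)..t, Real.exp (-(t - s)) * w s * Real.exp (α * c s) * c s)
    (hp₀ : 0 ≤ p₀)
    (hc : ∀ s ∈ Icc 0 T, 0 ≤ c s ∧ c s ≤ M)
    (hw : ∀ s ∈ Icc 0 T, 0 ≤ w s ∧ w s ≤ W) :
    ∀ t ∈ Icc 0 T, p t ≤ p₀ + min (μ / (2 * M * α)) 1 * W := by
  intro t ht
  obtain ⟨ht0, htT⟩ := ht
  have hW : 0 ≤ W := le_trans (hw 0 ⟨le_refl 0, le_of_lt hT⟩).1 (hw 0 ⟨le_refl 0, le_of_lt hT⟩).2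
  have hsub : Icc (0:ℝ) t ⊆ Icc 0 T := Icc_subset_Icc le_rfl htT
  have huIcc : uIcc (0:ℝ) t = Icc 0 t := uIcc_of_le ht0
  set C := W * Real.exp (α * M) * M with hC
  have hCnn : 0 ≤ C := by positivity
  -- integrability of the integrand
  have hint : IntervalIntegrable
      (fun s => Real.exp (-(t - s)) * w s * Real.exp (α * c s) * c s)
      MeasureTheory.volume 0 t := by
    apply ContinuousOn.intervalIntegrable
    rw [huIcc]
    have h1 : ContinuousOn (fun s : ℝ => Real.exp (-(t - s))) (Icc 0 t) :=
      (Real.continuous_exp.comp (by continuity)).continuousOn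
    exact ((h1.mul ((hwc.mono hsub))).mul
      ((Real.continuous_exp.comp_continuousOn ((continuousOn_const.mul (hcc.mono hsub)))))).mul
      (hcc.mono hsub)
  have hintg : IntervalIntegrable (fun s => Real.exp (-(t - s)) * C)
      MeasureTheory.volume 0 t := by
    apply ContinuousOn.intervalIntegrable
    exact ((Real.continuous_exp.comp (by continuity)).continuousOn).mul continuousOn_const
  -- pointwise bound
  have hmono : (∫ s in (0:ℝ)..t, Real.exp (-(t - s)) * w s * Real.exp (α * c s) * c s)
      ≤ ∫ s in (0:ℝ)..t, Real.exp (-(t - s)) * C := by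
    apply intervalIntegral.integral_mono_on ht0 hint hintg
    intro s hs
    have hs' := hsub hs
    obtain ⟨hc0, hcM⟩ := hc s hs'
    obtain ⟨hw0, hwW⟩ := hw s hs'
    have he : Real.exp (α * c s) ≤ Real.exp (α * M) :=
      Real.exp_le_exp.2 (by nlinarith)
    have hepos : (0:ℝ) < Real.exp (-(t - s)) := Real.exp_pos _
    rw [hC]
    calc Real.exp (-(t - s)) * w s * Real.exp (α * c s) * c s
        ≤ Real.exp (-(t - s)) * W * Real.exp (α * M) * M := by
          gcongr <;> positivity
      _ = Real.exp (-(t - s)) * (W * Real.exp (α * M) * M) := by ring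
  -- compute the dominating integral
  have hcalc : (∫ s in (0:ℝ)..t, Real.exp (-(t - s)) * C)
      = C * (1 - Real.exp (-t)) := by
    have : ∀ s : ℝ, Real.exp (-(t - s)) * C = Real.exp s * (Real.exp (-t) * C) := by
      intro s
      rw [show -(t - s) = s + (-t) by ring, Real.exp_add]
      ring
    simp only [this]
    rw [intervalIntegral.integral_mul_const, integral_exp]
    rw [Real.exp_zero]
    have h := Real.exp_ne_zero t
    rw [Real.exp_neg]
    field_simp
  -- combine
  have h1 : Real.exp (-t) * p₀ ≤ p₀ := by
    have : Real.exp (-t) ≤ 1 := Real.exp_le_one_iff.2 (by linarith)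
    nlinarith [Real.exp_pos (-t)]
  have h2 : C * (1 - Real.exp (-t)) ≤ min (μ / (2 * M * α)) 1 * W := by
    have ht' : Real.exp (-Tstar) ≤ Real.exp (-t) :=
      Real.exp_le_exp.2 (by linarith)
    have hMe : M * Real.exp (α * M) * (1 - Real.exp (-t))
        ≤ min (μ / (2 * M * α)) 1 := by
      have h0 : (0 : ℝ) < M * Real.exp (α * M) := by positivity
      nlinarith
    calc C * (1 - Real.exp (-t)) = W * (M * Real.exp (α * M) * (1 - Real.exp (-t))) := by
          rw [hC]; ring
      _ ≤ W * min (μ / (2 * M * α)) 1 := by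
          apply mul_le_mul_of_nonneg_left hMe hW
      _ = min (μ / (2 * M * α)) 1 * W := by ring
  rw [hvoc t ⟨ht0, htT⟩]
  linarith [le_trans hmono (le_of_eq hcalc)]
end

section
/- Let α ≥ 0, T > 0 and w ∈ C⁰(Ω̄×[0,T]) nonnegative, c₀, p₀ ∈ C⁰(Ω̄; [0,∞)). For each x ∈ Ω̄, the ODE system cₜ = −pc, pₜ = w e^{αc} c − p with initial values (c₀(x), p₀(x)) has a unique solution (c(x,·), p(x,·)) defined on all of [0,T], and it satisfies 0 ≤ c(x,t) ≤ c₀(x) and 0 ≤ p(x,t) ≤ max{p₀(x), c₀(x)e^{αc₀(x)}·max_{s∈[0,T]}w(x,s)} for all t ∈ [0,T]. -/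
/-!
The right-hand side is `C¹`, hence Lipschitz on compact sets, so uniqueness follows from Grönwall.
For existence, truncate the state to the box `[0, c₀] × [0, M]` with
`M = max p₀ (c₀ e^{α c₀} max w)`: the truncated field is globally Lipschitz and bounded, so
Picard–Lindelöf gives a solution on all of `[0, T]`. On the faces of the box the truncated field
points inwards (`cₜ = -pc ≤ 0`, `cₜ = 0` at `c = 0`, `pₜ ≥ 0` at `p = 0` and
`pₜ ≤ c₀ e^{α c₀} max w - M ≤ 0` at `p = M`), so a barrier argument keeps the solution in the box,
where it solves the untruncated system.
-/

open Set Real Filter Topology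
open scoped NNReal

theorem image_le_of_deriv_right_nonpos_of_lt {f f' : ℝ → ℝ} {a b B : ℝ}
    (hf : ContinuousOn f (Icc a b)) (hf' : ∀ x ∈ Ico a b, HasDerivWithinAt f (f' x) (Ici x) x)
    (ha : f a ≤ B) (bound : ∀ x ∈ Ico a b, B < f x → f' x ≤ 0) :
    ∀ ⦃x⦄, x ∈ Icc a b → f x ≤ B := by
  intro x hx
  have fence : ∀ ε > 0, f x ≤ B + ε * (1 + (x - a)) := by
    intro ε hε
    have hB : ∀ y, HasDerivAt (fun y => B + ε * (1 + (y - a))) ε y := fun y => by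
      simpa using ((((hasDerivAt_id y).sub_const a).const_add 1).const_mul ε).const_add B
    refine image_le_of_deriv_right_lt_deriv_boundary hf hf' ?_ hB (fun y hy hfy => ?_) hx
    · simp only [sub_self, add_zero, mul_one]
      linarith
    exact (bound y hy (by rw [hfy]; nlinarith [hy.1])).trans_lt hε
  refine le_of_forall_pos_le_add fun δ hδ => ?_
  have hxa : 0 < 1 + (x - a) := by linarith [hx.1]
  calc f x ≤ B + δ / (1 + (x - a)) * (1 + (x - a)) := fence _ (by positivity)
    _ = B + δ := by field_simp

theorem le_image_of_deriv_right_nonneg_of_lt {f f' : ℝ → ℝ} {a b B : ℝ}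
    (hf : ContinuousOn f (Icc a b)) (hf' : ∀ x ∈ Ico a b, HasDerivWithinAt f (f' x) (Ici x) x)
    (ha : B ≤ f a) (bound : ∀ x ∈ Ico a b, f x < B → 0 ≤ f' x) :
    ∀ ⦃x⦄, x ∈ Icc a b → B ≤ f x := by
  intro x hx
  have := image_le_of_deriv_right_nonpos_of_lt (B := -B) hf.neg (fun y hy => (hf' y hy).neg)
    (neg_le_neg ha) (fun y hy hy' => neg_nonpos.2 (bound y hy (neg_lt_neg_iff.1 hy'))) hx
  exact neg_le_neg_iff.1 this

theorem exists_forall_mem_Icc_hasDerivWithinAt_of_lipschitzWith {E : Type*}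
    [NormedAddCommGroup E] [NormedSpace ℝ E] [CompleteSpace E] {f : ℝ → E → E}
    {tmin tmax : ℝ} {K L : ℝ≥0} (hlip : ∀ t ∈ Icc tmin tmax, LipschitzWith K (f t))
    (hcont : ∀ x, ContinuousOn (f · x) (Icc tmin tmax))
    (hbound : ∀ t ∈ Icc tmin tmax, ∀ x, ‖f t x‖ ≤ L) (t₀ : Icc tmin tmax) (x₀ : E) :
    ∃ α : ℝ → E, α t₀ = x₀ ∧
      ∀ t ∈ Icc tmin tmax, HasDerivWithinAt α (f t (α t)) (Icc tmin tmax) t :=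
  IsPicardLindelof.exists_eq_forall_mem_Icc_hasDerivWithinAt₀
    (a := L * (max (tmax - t₀) (t₀ - tmin)).toNNReal)
    { lipschitzOnWith := fun t ht => (hlip t ht).lipschitzOnWith
      continuousOn := fun x _ => hcont x
      norm_le := fun t ht x _ => hbound t ht x
      mul_max_le := by
        have : 0 ≤ max ((tmax : ℝ) - t₀) (t₀ - tmin) := le_max_of_le_left (sub_nonneg.2 t₀.2.2)
        simp [Real.coe_toNNReal _ this] }

theorem LocallyLipschitz.exists_forall_lipschitzOnWith_prodMk_left {α β γ : Type*}
    [PseudoMetricSpace α] [PseudoMetricSpace β] [PseudoMetricSpace γ] {F : α × β → γ}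
    (hF : LocallyLipschitz F) {W : Set α} {B : Set β} (hW : IsCompact W) (hB : IsCompact B) :
    ∃ K, ∀ w ∈ W, LipschitzOnWith K (fun y => F (w, y)) B := by
  obtain ⟨K, hK⟩ := hF.locallyLipschitzOn.exists_lipschitzOnWith_of_compact (hW.prod hB)
  refine ⟨K, fun w hw => ?_⟩
  have := hK.comp (LipschitzWith.prodMk_left w).lipschitzOnWith fun y hy => mk_mem_prod hw hy
  rwa [mul_one] at this

theorem ODE_solution_unique_of_mem_Icc_of_hasDerivAt_Ioo {E : Type*} [NormedAddCommGroup E]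
    [NormedSpace ℝ E] {v : ℝ → E → E} {s : ℝ → Set E} {K : ℝ≥0} {f g : ℝ → E} {a b : ℝ}
    (hv : ∀ t ∈ Ioo a b, LipschitzOnWith K (v t) (s t))
    (hf : ContinuousOn f (Icc a b)) (hf' : ∀ t ∈ Ioo a b, HasDerivAt f (v t (f t)) t)
    (hfs : ∀ t ∈ Ioo a b, f t ∈ s t)
    (hg : ContinuousOn g (Icc a b)) (hg' : ∀ t ∈ Ioo a b, HasDerivAt g (v t (g t)) t)
    (hgs : ∀ t ∈ Ioo a b, g t ∈ s t) (ha : f a = g a) :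
    EqOn f g (Icc a b) := by
  intro t ht
  obtain rfl | hat := ht.1.eq_or_lt
  · exact ha
  have hsub : ∀ a' ∈ Ioo a t, Ico a' t ⊆ Ioo a b := fun a' ha' τ hτ =>
    ⟨ha'.1.trans_le hτ.1, hτ.2.trans_le ht.2⟩
  -- Grönwall from every `a' ∈ (a, t)`, then let `a' → a`.
  have gronwall : ∀ a' ∈ Ioo a t, dist (f t) (g t) ≤ dist (f a') (g a') * exp (K * (t - a')) :=
    fun a' ha' => dist_le_of_trajectories_ODE_of_mem (fun τ hτ => hv τ (hsub a' ha' hτ))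
      (hf.mono (Icc_subset_Icc ha'.1.le ht.2))
      (fun τ hτ => (hf' τ (hsub a' ha' hτ)).hasDerivWithinAt) (fun τ hτ => hfs τ (hsub a' ha' hτ))
      (hg.mono (Icc_subset_Icc ha'.1.le ht.2))
      (fun τ hτ => (hg' τ (hsub a' ha' hτ)).hasDerivWithinAt) (fun τ hτ => hgs τ (hsub a' ha' hτ))
      le_rfl t ⟨ha'.2.le, le_rfl⟩
  have hle : 𝓝[Ioo a t] a ≤ 𝓝[Icc a b] a :=
    nhdsWithin_mono a (Ioo_subset_Icc_self.trans (Icc_subset_Icc_right ht.2))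
  have hlim : Tendsto (fun a' => dist (f a') (g a') * exp (K * (t - a'))) (𝓝[Ioo a t] a)
      (𝓝 (dist (f a) (g a) * exp (K * (t - a)))) := by
    refine ((hf a (left_mem_Icc.2 (ht.1.trans ht.2))).mono_left hle).dist
      ((hg a (left_mem_Icc.2 (ht.1.trans ht.2))).mono_left hle) |>.mul ?_
    exact ((continuous_const.mul (continuous_const.sub continuous_id)).rexp.tendsto a).mono_left
      nhdsWithin_le_nhds
  have := left_nhdsWithin_Ioo_neBot hat
  rw [ha, dist_self, zero_mul] at hlim
  exact dist_le_zero.1 (ge_of_tendsto hlim (eventually_nhdsWithin_of_forall gronwall))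

noncomputable def proteinField (α w : ℝ) (y : ℝ × ℝ) : ℝ × ℝ :=
  (-y.2 * y.1, w * exp (α * y.1) * y.1 - y.2)

theorem contDiff_proteinField (α : ℝ) {n : WithTop ℕ∞} :
    ContDiff ℝ n fun z : ℝ × (ℝ × ℝ) => proteinField α z.1 z.2 := by
  unfold proteinField
  fun_prop

theorem exists_forall_lipschitzOnWith_proteinField (α : ℝ) {W : Set ℝ} {B : Set (ℝ × ℝ)}
    (hW : IsCompact W) (hB : IsCompact B) :
    ∃ K, ∀ w ∈ W, LipschitzOnWith K (proteinField α w) B :=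
  (contDiff_proteinField α (n := 1)).locallyLipschitz.exists_forall_lipschitzOnWith_prodMk_left
    hW hB

def IsProteinSolution (α T : ℝ) (ω c p : ℝ → ℝ) : Prop :=
  ContinuousOn c (Icc 0 T) ∧ ContinuousOn p (Icc 0 T) ∧
    (∀ t ∈ Ioo 0 T, HasDerivAt c (-(p t) * c t) t) ∧
    ∀ t ∈ Ioo 0 T, HasDerivAt p (ω t * exp (α * c t) * c t - p t) t

theorem IsProteinSolution.unique {α T : ℝ} {ω c p c' p' : ℝ → ℝ}
    (hω : ContinuousOn ω (Icc 0 T)) (h : IsProteinSolution α T ω c p)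
    (h' : IsProteinSolution α T ω c' p') (hc0 : c 0 = c' 0) (hp0 : p 0 = p' 0) :
    EqOn c c' (Icc 0 T) ∧ EqOn p p' (Icc 0 T) := by
  obtain ⟨hc, hp, hdc, hdp⟩ := h
  obtain ⟨hc', hp', hdc', hdp'⟩ := h'
  have hy := hc.prodMk hp
  have hy' := hc'.prodMk hp'
  obtain ⟨r, hr⟩ := ((isCompact_Icc.image_of_continuousOn hy).union
    (isCompact_Icc.image_of_continuousOn hy')).isBounded.subset_closedBall (0 : ℝ × ℝ)
  obtain ⟨K, hK⟩ := exists_forall_lipschitzOnWith_proteinField α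
    (isCompact_Icc.image_of_continuousOn hω) (isCompact_closedBall (0 : ℝ × ℝ) r)
  have heq := ODE_solution_unique_of_mem_Icc_of_hasDerivAt_Ioo
    (v := fun t => proteinField α (ω t)) (s := fun _ => Metric.closedBall 0 r)
    (fun t ht => hK _ (mem_image_of_mem ω (Ioo_subset_Icc_self ht)))
    hy (fun t ht => (hdc t ht).prodMk (hdp t ht))
    (fun t ht => hr (.inl (mem_image_of_mem _ (Ioo_subset_Icc_self ht))))
    hy' (fun t ht => (hdc' t ht).prodMk (hdp' t ht))
    (fun t ht => hr (.inr (mem_image_of_mem _ (Ioo_subset_Icc_self ht)))) (Prod.ext hc0 hp0)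
  exact ⟨fun t ht => congrArg Prod.fst (heq ht), fun t ht => congrArg Prod.snd (heq ht)⟩

noncomputable def boxProj {a M : ℝ} (ha : 0 ≤ a) (hM : 0 ≤ M) (y : ℝ × ℝ) : ℝ × ℝ :=
  (projIcc 0 a ha y.1, projIcc 0 M hM y.2)

section boxProj

variable {a M : ℝ} (ha : 0 ≤ a) (hM : 0 ≤ M)

theorem lipschitzWith_boxProj : LipschitzWith 1 (boxProj ha hM) := by
  have h₁ := (LipschitzWith.subtype_val _).comp (LipschitzWith.projIcc ha) |>.comp
    (LipschitzWith.prod_fst (α := ℝ) (β := ℝ))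
  have h₂ := (LipschitzWith.subtype_val _).comp (LipschitzWith.projIcc hM) |>.comp
    (LipschitzWith.prod_snd (α := ℝ) (β := ℝ))
  have h := h₁.prodMk h₂
  simp only [mul_one, max_self] at h
  exact h

theorem boxProj_mem (y : ℝ × ℝ) : boxProj ha hM y ∈ Icc 0 a ×ˢ Icc 0 M :=
  ⟨(projIcc 0 a ha y.1).2, (projIcc 0 M hM y.2).2⟩

theorem boxProj_of_mem {y : ℝ × ℝ} (hy : y ∈ Icc 0 a ×ˢ Icc 0 M) : boxProj ha hM y = y := by
  simp [boxProj, projIcc_of_mem _ hy.1, projIcc_of_mem _ hy.2]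

end boxProj

section truncation

variable {α T W a M : ℝ} {ω : ℝ → ℝ}

theorem exists_hasDerivWithinAt_proteinField_boxProj (hT : 0 ≤ T)
    (hω : ContinuousOn ω (Icc 0 T)) (ha : 0 ≤ a) (hM : 0 ≤ M) (y₀ : ℝ × ℝ) :
    ∃ y : ℝ → ℝ × ℝ, y 0 = y₀ ∧ ∀ t ∈ Icc 0 T,
      HasDerivWithinAt y (proteinField α (ω t) (boxProj ha hM (y t))) (Icc 0 T) t := by
  have hbox : IsCompact (Icc 0 a ×ˢ Icc 0 M) := isCompact_Icc.prod isCompact_Icc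
  have hW := isCompact_Icc.image_of_continuousOn hω
  have hcont := (contDiff_proteinField α (n := 0)).continuous
  obtain ⟨K, hK⟩ := exists_forall_lipschitzOnWith_proteinField α hW hbox
  obtain ⟨L, hL⟩ := (hW.prod hbox).exists_bound_of_continuousOn hcont.continuousOn
  have hlip : ∀ t ∈ Icc 0 T, LipschitzWith (K * 1) (proteinField α (ω t) ∘ boxProj ha hM) :=
    fun t ht => lipschitzOnWith_univ.1 <| (hK _ (mem_image_of_mem ω ht)).comp
      (lipschitzWith_boxProj ha hM).lipschitzOnWith fun y _ => boxProj_mem ha hM y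
  have hbound : ∀ t ∈ Icc 0 T, ∀ y, ‖proteinField α (ω t) (boxProj ha hM y)‖ ≤ L.toNNReal :=
    fun t ht y => (hL (ω t, _) ⟨mem_image_of_mem ω ht, boxProj_mem ha hM y⟩).trans
      L.le_coe_toNNReal
  exact exists_forall_mem_Icc_hasDerivWithinAt_of_lipschitzWith hlip
    (fun y => hcont.comp_continuousOn (hω.prodMk continuousOn_const)) hbound
    (⟨0, le_rfl, hT⟩ : Icc 0 T) y₀

theorem mem_box_of_hasDerivWithinAt_proteinField_boxProj (hα : 0 ≤ α)
    (hω₀ : ∀ t ∈ Icc 0 T, 0 ≤ ω t) (hωW : ∀ t ∈ Icc 0 T, ω t ≤ W) (ha : 0 ≤ a) (hM : 0 ≤ M)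
    (hWM : a * exp (α * a) * W ≤ M) {y : ℝ → ℝ × ℝ} (hy₀ : y 0 ∈ Icc 0 a ×ˢ Icc 0 M)
    (hy : ∀ t ∈ Icc 0 T,
      HasDerivWithinAt y (proteinField α (ω t) (boxProj ha hM (y t))) (Icc 0 T) t) :
    ∀ t ∈ Icc 0 T, y t ∈ Icc 0 a ×ˢ Icc 0 M := by
  set q := fun t => boxProj ha hM (y t)
  have hq : ∀ t, q t ∈ Icc 0 a ×ˢ Icc 0 M := fun t => boxProj_mem ha hM (y t)
  have hcont : ContinuousOn y (Icc 0 T) := fun t ht => (hy t ht).continuousWithinAt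
  have hright : ∀ t ∈ Ico 0 T,
      HasDerivWithinAt y (proteinField α (ω t) (q t)) (Ici t) t := fun t ht =>
    (hy t (Ico_subset_Icc_self ht)).mono_of_mem_nhdsWithin
      (mem_of_superset (Icc_mem_nhdsGE ht.2) (Icc_subset_Icc_left ht.1))
  have hc := continuous_fst.comp_continuousOn hcont
  have hc' := fun t ht => hasFDerivAt_fst.comp_hasDerivWithinAt t (hright t ht)
  have hp := continuous_snd.comp_continuousOn hcont
  have hp' := fun t ht => hasFDerivAt_snd.comp_hasDerivWithinAt t (hright t ht)
  intro t ht
  refine ⟨⟨?_, ?_⟩, ?_, ?_⟩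
  · refine le_image_of_deriv_right_nonneg_of_lt hc hc' hy₀.1.1 (fun s _ hs => ?_) ht
    have : (q s).1 = 0 := congrArg Subtype.val (projIcc_of_le_left ha hs.le)
    simp [proteinField, this]
  · refine image_le_of_deriv_right_nonpos_of_lt hc hc' hy₀.1.2 (fun s _ _ => ?_) ht
    have := mul_nonneg (hq s).2.1 (hq s).1.1
    simpa [proteinField] using this
  · refine le_image_of_deriv_right_nonneg_of_lt hp hp' hy₀.2.1 (fun s hs hps => ?_) ht
    have hq₀ : (q s).2 = 0 := congrArg Subtype.val (projIcc_of_le_left hM hps.le)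
    have hω := hω₀ s (Ico_subset_Icc_self hs)
    have hq₁ := (hq s).1.1
    simp only [ContinuousLinearMap.coe_snd', proteinField, hq₀, sub_zero]
    positivity
  · refine image_le_of_deriv_right_nonpos_of_lt hp hp' hy₀.2.2 (fun s hs hps => ?_) ht
    have hqM : (q s).2 = M := congrArg Subtype.val (projIcc_of_right_le hM hps.le)
    obtain ⟨⟨hq₀, hqa⟩, -⟩ := hq s
    have hω := hω₀ s (Ico_subset_Icc_self hs)
    have hωW := hωW s (Ico_subset_Icc_self hs)
    have hW := hω.trans hωW
    have : ω s * exp (α * (q s).1) * (q s).1 ≤ W * exp (α * a) * a := by gcongr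
    simp only [ContinuousLinearMap.coe_snd', proteinField, hqM]
    linarith

theorem exists_isProteinSolution (hα : 0 ≤ α) (hT : 0 ≤ T) (hω : ContinuousOn ω (Icc 0 T))
    (hω₀ : ∀ t ∈ Icc 0 T, 0 ≤ ω t) (hωW : ∀ t ∈ Icc 0 T, ω t ≤ W) {b : ℝ} (ha : 0 ≤ a)
    (hb : 0 ≤ b) :
    ∃ c p, IsProteinSolution α T ω c p ∧ c 0 = a ∧ p 0 = b ∧
      (∀ t ∈ Icc 0 T, 0 ≤ c t ∧ c t ≤ a) ∧
      ∀ t ∈ Icc 0 T, 0 ≤ p t ∧ p t ≤ max b (a * exp (α * a) * W) := by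
  have hM : 0 ≤ max b (a * exp (α * a) * W) := hb.trans (le_max_left _ _)
  obtain ⟨y, hy₀, hy⟩ := exists_hasDerivWithinAt_proteinField_boxProj (α := α) hT hω ha hM (a, b)
  have hbox := mem_box_of_hasDerivWithinAt_proteinField_boxProj hα hω₀ hωW ha hM
    (le_max_right _ _) (hy₀ ▸ ⟨⟨ha, le_rfl⟩, hb, le_max_left _ _⟩) hy
  have hcont : ContinuousOn y (Icc 0 T) := fun t ht => (hy t ht).continuousWithinAt
  have hderiv : ∀ t ∈ Ioo 0 T, HasDerivAt y (proteinField α (ω t) (y t)) t := fun t ht => by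
    simpa only [boxProj_of_mem ha hM (hbox t (Ioo_subset_Icc_self ht))] using
      (hy t (Ioo_subset_Icc_self ht)).hasDerivAt (Icc_mem_nhds ht.1 ht.2)
  have hc' := fun t (ht : t ∈ Ioo 0 T) => hasFDerivAt_fst.comp_hasDerivAt t (hderiv t ht)
  have hp' := fun t (ht : t ∈ Ioo 0 T) => hasFDerivAt_snd.comp_hasDerivAt t (hderiv t ht)
  exact ⟨fun t => (y t).1, fun t => (y t).2, ⟨continuous_fst.comp_continuousOn hcont,
    continuous_snd.comp_continuousOn hcont, hc', hp'⟩, by simp [hy₀], by simp [hy₀],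
    fun t ht => (hbox t ht).1, fun t ht => (hbox t ht).2⟩

end truncation

theorem stmt15_general {n : ℕ} (Ω : Set (EuclideanSpace ℝ (Fin n)))
    (α T : ℝ) (hα : 0 ≤ α) (hT : 0 < T)
    (w : EuclideanSpace ℝ (Fin n) → ℝ → ℝ)
    (hwcont : ContinuousOn (fun q : EuclideanSpace ℝ (Fin n) × ℝ => w q.1 q.2)
      (closure Ω ×ˢ Icc 0 T))
    (hwnn : ∀ x ∈ closure Ω, ∀ t ∈ Icc 0 T, 0 ≤ w x t)
    (c₀ p₀ : EuclideanSpace ℝ (Fin n) → ℝ)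
    (hc₀nn : ∀ x ∈ closure Ω, 0 ≤ c₀ x) (hp₀nn : ∀ x ∈ closure Ω, 0 ≤ p₀ x) :
    ∀ x ∈ closure Ω, ∃ c p : ℝ → ℝ,
      (ContinuousOn c (Icc 0 T) ∧ ContinuousOn p (Icc 0 T)) ∧
      c 0 = c₀ x ∧ p 0 = p₀ x ∧
      (∀ t ∈ Ioo 0 T, HasDerivAt c (-(p t) * c t) t) ∧
      (∀ t ∈ Ioo 0 T,
        HasDerivAt p (w x t * Real.exp (α * c t) * c t - p t) t) ∧
      (∀ t ∈ Icc 0 T, 0 ≤ c t ∧ c t ≤ c₀ x) ∧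
      (∀ t ∈ Icc 0 T, 0 ≤ p t ∧
        p t ≤ max (p₀ x) (c₀ x * Real.exp (α * c₀ x)
          * sSup ((fun s => w x s) '' Icc 0 T))) ∧
      -- uniqueness
      (∀ c' p' : ℝ → ℝ,
        ContinuousOn c' (Icc 0 T) → ContinuousOn p' (Icc 0 T) →
        c' 0 = c₀ x → p' 0 = p₀ x →
        (∀ t ∈ Ioo 0 T, HasDerivAt c' (-(p' t) * c' t) t) →
        (∀ t ∈ Ioo 0 T,
          HasDerivAt p' (w x t * Real.exp (α * c' t) * c' t - p' t) t) →
        ∀ t ∈ Icc 0 T, c' t = c t ∧ p' t = p t) := by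
  intro x hx
  have hω : ContinuousOn (w x) (Icc 0 T) :=
    hwcont.comp (continuous_const.prodMk continuous_id).continuousOn fun t ht => ⟨hx, ht⟩
  have hbdd := (isCompact_Icc.image_of_continuousOn hω).bddAbove
  obtain ⟨c, p, hsol, hc0, hp0, hcb, hpb⟩ := exists_isProteinSolution hα hT.le hω (hwnn x hx)
    (fun t ht => le_csSup hbdd (mem_image_of_mem _ ht)) (hc₀nn x hx) (hp₀nn x hx)
  refine ⟨c, p, ⟨hsol.1, hsol.2.1⟩, hc0, hp0, hsol.2.2.1, hsol.2.2.2, hcb, hpb, ?_⟩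
  intro c' p' hc' hp' hc'0 hp'0 hdc' hdp' t ht
  have huniq := IsProteinSolution.unique hω ⟨hc', hp', hdc', hdp'⟩ hsol (hc'0.trans hc0.symm)
    (hp'0.trans hp0.symm)
  exact ⟨huniq.1 ht, huniq.2 ht⟩

/-- Lemma 2.3(a): for each `x ∈ Ω̄` the system
`cₜ = −pc`, `pₜ = w e^{αc} c − p` with nonnegative data has a unique global
solution on `[0,T]`, satisfying `0 ≤ c ≤ c₀(x)` and
`0 ≤ p ≤ max {p₀(x), c₀(x) e^{αc₀(x)} max_s w(x,s)}`. -/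
theorem stmt15 {n : ℕ} (Ω : Set (EuclideanSpace ℝ (Fin n)))
    (hΩ : Bornology.IsBounded Ω) (α T : ℝ) (hα : 0 ≤ α) (hT : 0 < T)
    (w : EuclideanSpace ℝ (Fin n) → ℝ → ℝ)
    (hwcont : ContinuousOn (fun q : EuclideanSpace ℝ (Fin n) × ℝ => w q.1 q.2)
      (closure Ω ×ˢ Icc 0 T))
    (hwnn : ∀ x ∈ closure Ω, ∀ t ∈ Icc 0 T, 0 ≤ w x t)
    (c₀ p₀ : EuclideanSpace ℝ (Fin n) → ℝ)
    (hc₀ : ContinuousOn c₀ (closure Ω)) (hp₀ : ContinuousOn p₀ (closure Ω))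
    (hc₀nn : ∀ x ∈ closure Ω, 0 ≤ c₀ x) (hp₀nn : ∀ x ∈ closure Ω, 0 ≤ p₀ x) :
    ∀ x ∈ closure Ω, ∃ c p : ℝ → ℝ,
      (ContinuousOn c (Icc 0 T) ∧ ContinuousOn p (Icc 0 T)) ∧
      c 0 = c₀ x ∧ p 0 = p₀ x ∧
      (∀ t ∈ Ioo 0 T, HasDerivAt c (-(p t) * c t) t) ∧
      (∀ t ∈ Ioo 0 T,
        HasDerivAt p (w x t * Real.exp (α * c t) * c t - p t) t) ∧
      (∀ t ∈ Icc 0 T, 0 ≤ c t ∧ c t ≤ c₀ x) ∧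
      (∀ t ∈ Icc 0 T, 0 ≤ p t ∧
        p t ≤ max (p₀ x) (c₀ x * Real.exp (α * c₀ x)
          * sSup ((fun s => w x s) '' Icc 0 T))) ∧
      -- uniqueness
      (∀ c' p' : ℝ → ℝ,
        ContinuousOn c' (Icc 0 T) → ContinuousOn p' (Icc 0 T) →
        c' 0 = c₀ x → p' 0 = p₀ x →
        (∀ t ∈ Ioo 0 T, HasDerivAt c' (-(p' t) * c' t) t) →
        (∀ t ∈ Ioo 0 T,
          HasDerivAt p' (w x t * Real.exp (α * c' t) * c' t - p' t) t) →
        ∀ t ∈ Icc 0 T, c' t = c t ∧ p' t = p t) :=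
  stmt15_general Ω α T hα hT w hwcont hwnn c₀ p₀ hc₀nn hp₀nn
end
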